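/- Language inclusion holds for the compressed automaton: every finite word w = σ_1 ⋯ σ_ℓ ∈ {0,1}^ℓ that admits a run in (U, F) starting from ⟨0,…,0⟩ (i.e., states q_0 = ⟨0,…,0⟩, q_1, …, q_ℓ ∈ U with (q_{t−1}, σ_t, q_t) ∈ F for all 1 ≤ t ≤ ℓ) also admits a run in (U_c, F_c) starting from ⟨0,…,0⟩. -/
import Mathlib


/-- `Uset k m` : nonincreasing `m`-tuples with entries in `{0, …, k-m}`. -/
def Uset (k m : ℕ) : Set (Fin m → ℕ) :=
  {u | (∀ i, u i ≤ k - m) ∧ ∀ i j : Fin m, i ≤ j → u j ≤ u i}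

/-- `Ucset k m c` : states of the compressed automaton, i.e. the elements `u ∈ U`
such that `(u₁ - u₂) mod c = 0` or `u_m = 0`. -/
def Ucset (k m c : ℕ) (hm : 2 ≤ m) : Set (Fin m → ℕ) :=
  {u | u ∈ Uset k m ∧
    ((u ⟨0, by omega⟩ - u ⟨1, by omega⟩) % c = 0 ∨ u ⟨m - 1, by omega⟩ = 0)}

/-- The target of the `1`-transition: `⟨max(u₁-1,0), …, max(u_m-1,0)⟩`
(in `ℕ`, truncated subtraction realizes `max(· - 1, 0)`). -/
def oneStep (m : ℕ) (u : Fin m → ℕ) : Fin m → ℕ := fun i => u i - 1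

/-- The target of the `0`-transition of the compressed automaton:
`⟨u₀, u₁, …, u_{m-1}⟩` where `u₀ = k - m` if `u_{m-1} = 0` and
`u₀ = k - m - ((k - m - u₁) mod c)` otherwise. -/
def zeroStepC (k m c : ℕ) (hm : 2 ≤ m) (u : Fin m → ℕ) : Fin m → ℕ :=
  fun i => if (i : ℕ) = 0 then
      (if u ⟨m - 2, by omega⟩ = 0 then k - m
       else k - m - (k - m - u ⟨0, by omega⟩) % c)
    else u ⟨(i : ℕ) - 1, lt_of_le_of_lt (Nat.sub_le _ _) i.isLt⟩

/-- Membership in the transition set `F_c` of the compressed automaton `(U_c, F_c)`. -/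
def FcRel (k m c : ℕ) (hm : 2 ≤ m) (u : Fin m → ℕ) (σ : Bool) (u' : Fin m → ℕ) : Prop :=
  u ∈ Ucset k m c hm ∧
  ((σ = true ∧ u' = oneStep m u) ∨
   (σ = false ∧ u ⟨m - 1, by omega⟩ = 0 ∧ u' = zeroStepC k m c hm u))

/-- The target of the `0`-transition of the uncompressed automaton:
`⟨k-m, u₁, …, u_{m-1}⟩`. -/
def zeroStep (k m : ℕ) (u : Fin m → ℕ) : Fin m → ℕ :=
  fun i => if (i : ℕ) = 0 then k - m
    else u ⟨(i : ℕ) - 1, lt_of_le_of_lt (Nat.sub_le _ _) i.isLt⟩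

/-- Membership in the transition set `F` of the automaton `(U, F)`. -/
def Frel (k m : ℕ) (hm : 0 < m) (u : Fin m → ℕ) (σ : Bool) (u' : Fin m → ℕ) : Prop :=
  u ∈ Uset k m ∧
  ((σ = true ∧ u' = oneStep m u) ∨
   (σ = false ∧ u ⟨m - 1, Nat.sub_lt hm Nat.one_pos⟩ = 0 ∧ u' = zeroStep k m u))

/-- `hasRunIn X step q w` : the word `w = σ₁ ⋯ σ_ℓ` admits a run
`q = q₀, q₁, …, q_ℓ` with all `q_t` (for `t ≥ 1`) in `X` and
`(q_{t-1}, σ_t, q_t)` a transition, for all `1 ≤ t ≤ ℓ`. -/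
def hasRunIn {S : Type} (X : Set S) (step : S → Bool → S → Prop) :
    S → List Bool → Prop
  | _, [] => True
  | q, σ :: rest => ∃ q' ∈ X, step q σ q' ∧ hasRunIn X step q' rest

lemma oneStep_mem_Uc (k m c : ℕ) (hm : 2 ≤ m) (v : Fin m → ℕ)
    (hv : v ∈ Ucset k m c hm) : oneStep m v ∈ Ucset k m c hm := by
  obtain ⟨⟨hb, hmono⟩, hcond⟩ := hv
  refine ⟨⟨fun i => le_trans (Nat.sub_le _ _) (hb i),
    fun i j hij => Nat.sub_le_sub_right (hmono i j hij) 1⟩, ?_⟩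
  rcases hcond with h | h
  · by_cases h1 : v ⟨1, by omega⟩ = 0
    · right
      have := hmono ⟨1, by omega⟩ ⟨m - 1, by omega⟩ (Fin.mk_le_mk.mpr (by omega))
      simp only [oneStep]; omega
    · left
      have h01 := hmono ⟨0, by omega⟩ ⟨1, by omega⟩ (Fin.mk_le_mk.mpr (by omega))
      have heq : v ⟨0, by omega⟩ - 1 - (v ⟨1, by omega⟩ - 1)
          = v ⟨0, by omega⟩ - v ⟨1, by omega⟩ := by omega
      simpa only [oneStep, heq] using h
  · right; simp only [oneStep]; omega

lemma zeroStepC_apply_zero (k m c : ℕ) (hm : 2 ≤ m) (v : Fin m → ℕ) (h0 : 0 < m) :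
    zeroStepC k m c hm v ⟨0, h0⟩ =
      if v ⟨m - 2, by omega⟩ = 0 then k - m
      else k - m - (k - m - v ⟨0, by omega⟩) % c := rfl

lemma zeroStepC_apply_pos (k m c : ℕ) (hm : 2 ≤ m) (v : Fin m → ℕ) (i : Fin m)
    (hi : (i : ℕ) ≠ 0) :
    zeroStepC k m c hm v i
      = v ⟨(i : ℕ) - 1, lt_of_le_of_lt (Nat.sub_le _ _) i.isLt⟩ := by
  simp only [zeroStepC, if_neg hi]

lemma zeroStep_apply_zero (k m : ℕ) (v : Fin m → ℕ) (h0 : 0 < m) :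
    zeroStep k m v ⟨0, h0⟩ = k - m := rfl

lemma zeroStep_apply_pos (k m : ℕ) (v : Fin m → ℕ) (i : Fin m)
    (hi : (i : ℕ) ≠ 0) :
    zeroStep k m v i
      = v ⟨(i : ℕ) - 1, lt_of_le_of_lt (Nat.sub_le _ _) i.isLt⟩ := by
  simp only [zeroStep, if_neg hi]

lemma mod_sub_mod_aux (x y c : ℕ) (hy : y ≤ x) :
    (x - (x - y) % c - y) % c = 0 := by
  have hr : (x - y) % c ≤ x - y := Nat.mod_le _ _
  have h1 : x - (x - y) % c - y = (x - y) - (x - y) % c := by omega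
  rw [h1, show (x - y) - (x - y) % c = c * ((x - y) / c) by
    have := Nat.div_add_mod (x - y) c; omega]
  simp [Nat.mul_mod_right]

set_option maxHeartbeats 4000000 in
lemma zeroStepC_mem_Uc (k m c : ℕ) (hm : 2 ≤ m) (hc : 1 ≤ c) (v : Fin m → ℕ)
    (hv : v ∈ Ucset k m c hm) : zeroStepC k m c hm v ∈ Ucset k m c hm := by
  obtain ⟨⟨hb, hmono⟩, _⟩ := hv
  have hv0 : v ⟨0, by omega⟩ ≤ k - m := hb _
  have hmod := Nat.mod_le (k - m - v ⟨0, by omega⟩) c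
  have hfirst : v ⟨0, by omega⟩ ≤ zeroStepC k m c hm v ⟨0, by omega⟩ := by
    rw [zeroStepC_apply_zero]
    split
    · exact hv0
    · omega
  have hfb : zeroStepC k m c hm v ⟨0, by omega⟩ ≤ k - m := by
    rw [zeroStepC_apply_zero]
    split
    · exact le_refl _
    · exact Nat.sub_le _ _
  refine ⟨⟨?_, ?_⟩, ?_⟩
  · intro i
    rcases Nat.eq_zero_or_pos (i : ℕ) with h0 | h0
    · have hi : i = ⟨0, by omega⟩ := Fin.ext h0
      rw [hi]; exact hfb
    · exact le_trans
        (le_of_eq (zeroStepC_apply_pos k m c hm v i (Nat.pos_iff_ne_zero.mp h0)))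
        (hb _)
  · intro i j hij
    have hij' : (i : ℕ) ≤ (j : ℕ) := hij
    rcases Nat.eq_zero_or_pos (j : ℕ) with hj0 | hj0
    · have hi : i = ⟨0, by omega⟩ := Fin.ext (show (i:ℕ) = 0 by omega)
      have hj : j = ⟨0, by omega⟩ := Fin.ext hj0
      rw [hi, hj]
    · rcases Nat.eq_zero_or_pos (i : ℕ) with hi0 | hi0
      · have hi : i = ⟨0, by omega⟩ := Fin.ext hi0
        rw [hi]
        exact le_trans
          (le_of_eq (zeroStepC_apply_pos k m c hm v j (Nat.pos_iff_ne_zero.mp hj0)))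
          (le_trans (hmono ⟨0, by omega⟩ _ (Fin.mk_le_mk.mpr (by omega))) hfirst)
      · exact le_trans
          (le_of_eq (zeroStepC_apply_pos k m c hm v j (Nat.pos_iff_ne_zero.mp hj0)))
          (le_trans (hmono _ _ (Fin.mk_le_mk.mpr (by omega)))
            (le_of_eq
              (zeroStepC_apply_pos k m c hm v i (Nat.pos_iff_ne_zero.mp hi0)).symm))
  · by_cases hlast : v ⟨m - 2, by omega⟩ = 0
    · right
      refine (zeroStepC_apply_pos k m c hm v ⟨m - 1, by omega⟩
        (show (m:ℕ) - 1 ≠ 0 from by omega)).trans ?_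
      have heq : (⟨(m : ℕ) - 1 - 1,
          lt_of_le_of_lt (Nat.sub_le _ _)
            (Fin.isLt (⟨m - 1, by omega⟩ : Fin m))⟩ : Fin m)
          = ⟨m - 2, by omega⟩ := Fin.ext (show m - 1 - 1 = m - 2 from by omega)
      rw [heq]; exact hlast
    · left
      have e1 : zeroStepC k m c hm v ⟨1, by omega⟩ = v ⟨0, by omega⟩ := by
        refine (zeroStepC_apply_pos k m c hm v ⟨1, by omega⟩
          (show (1:ℕ) ≠ 0 from one_ne_zero)).trans (congrArg v ?_)
        exact Fin.ext rfl
      have e0 : zeroStepC k m c hm v ⟨0, by omega⟩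
          = k - m - (k - m - v ⟨0, by omega⟩) % c :=
        (zeroStepC_apply_zero k m c hm v (by omega)).trans (if_neg hlast)
      rw [e0, e1]
      exact mod_sub_mod_aux (k - m) (v ⟨0, by omega⟩) c hv0

set_option maxHeartbeats 4000000 in
/-- Language inclusion: every finite word over `{0,1}` admitting a run in `(U, F)`
from the initial state `⟨0,…,0⟩` also admits a run in `(U_c, F_c)` from `⟨0,…,0⟩`. -/
theorem language_inclusion (k m c : ℕ) (hm : 2 ≤ m) (hmk : m < k) (hc : 1 ≤ c)
    (w : List Bool)
    (hw : hasRunIn (Uset k m) (Frel k m (by omega)) (fun _ => 0) w) :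
    hasRunIn (Ucset k m c hm) (FcRel k m c hm) (fun _ => 0) w := by
  suffices h : ∀ w : List Bool, ∀ u v : Fin m → ℕ, v ∈ Ucset k m c hm →
      (∀ i, v i ≤ u i) → hasRunIn (Uset k m) (Frel k m (by omega)) u w →
      hasRunIn (Ucset k m c hm) (FcRel k m c hm) v w by
    refine h w _ _ ?_ (fun i => le_refl 0) hw
    exact ⟨⟨fun i => Nat.zero_le _, fun i j _ => le_refl 0⟩, Or.inl (by simp)⟩
  intro w
  induction w with
  | nil => intro u v _ _ _; trivial
  | cons σ rest ih =>
    intro u v hvUc hle hw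
    obtain ⟨u', hu'U, ⟨huU, hstep⟩, hrest⟩ := hw
    rcases hstep with ⟨hσ, hu'⟩ | ⟨hσ, hlast, hu'⟩
    · refine ⟨oneStep m v, oneStep_mem_Uc k m c hm v hvUc,
        ⟨hvUc, Or.inl ⟨hσ, rfl⟩⟩, ih _ _ (oneStep_mem_Uc k m c hm v hvUc) ?_ hrest⟩
      subst hu'
      exact fun i => Nat.sub_le_sub_right (hle i) 1
    · have hvlast : v ⟨m - 1, by omega⟩ = 0 := by
        have h1 := hle ⟨m - 1, by omega⟩
        have h2 : u (⟨m - 1, by omega⟩ : Fin m) = 0 := hlast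
        omega
      refine ⟨zeroStepC k m c hm v, zeroStepC_mem_Uc k m c hm hc v hvUc,
        ⟨hvUc, Or.inr ⟨hσ, hvlast, rfl⟩⟩,
        ih _ _ (zeroStepC_mem_Uc k m c hm hc v hvUc) ?_ hrest⟩
      subst hu'
      intro i
      rcases Nat.eq_zero_or_pos (i : ℕ) with h0 | h0
      · have hi : i = ⟨0, by omega⟩ := Fin.ext h0
        rw [hi, zeroStepC_apply_zero, zeroStep_apply_zero]
        split
        · exact le_refl _
        · exact Nat.sub_le _ _
      · rw [zeroStepC_apply_pos k m c hm v i (by omega),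
          zeroStep_apply_pos k m u i (by omega)]
        exact hle _
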